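/- Let C ≥ 2, d ≥ C, and labels y_1,…,y_n ∈ [C] such that every class occurs. Consider the minimization of Σ_{c∈[C]} ‖w_c‖² + ‖b‖² over (w_1,…,w_C, b, h_1,…,h_n) with w_c ∈ ℝ^d, b ∈ ℝ^C, h_i ∈ ℝ^d, subject to min_{i∈[n]} q_i ≥ 1 and ‖h_i‖ = 1 for all i, where q_i = ⟨w_{y_i}, h_i⟩ + b_{y_i} − max_{c ≠ y_i}(⟨w_c, h_i⟩ + b_c). A point is a minimizer if and only if: the convex hull of {w_c}_{c∈[C]} forms a regular (C−1)-simplex (i.e. ‖w_{c_1} − w_{c_2}‖² = 2(C−1)/C for all distinct c_1, c_2), ‖w_c‖ = (C−1)/C for all c, Σ_{c∈[C]} w_c = 0, b = 0, and h_i = (C/(C−1)) w_{y_i} for all i ∈ [n]. -/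

import Mathlib

open Finset

/-- The multi-class margin `q_i` of data point `i` with features `h`. -/
noncomputable def ncMargin {d C n : ℕ} (w : Fin C → EuclideanSpace ℝ (Fin d))
    (b : Fin C → ℝ) (y : Fin n → Fin C) (h : Fin n → EuclideanSpace ℝ (Fin d))
    (i : Fin n) : ℝ :=
  inner (𝕜 := ℝ) (w (y i)) (h i) + b (y i) -
    sSup {z : ℝ | ∃ c : Fin C, c ≠ y i ∧ z = inner (𝕜 := ℝ) (w c) (h i) + b c}

namespace NCAux

variable {d C n : ℕ}

lemma margin_iff (hC : 2 ≤ C) (w : Fin C → EuclideanSpace ℝ (Fin d))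
    (b : Fin C → ℝ) (y : Fin n → Fin C) (h : Fin n → EuclideanSpace ℝ (Fin d)) (i : Fin n) :
    1 ≤ ncMargin w b y h i ↔
      ∀ c, c ≠ y i → inner (𝕜 := ℝ) (w c) (h i) + b c ≤
        inner (𝕜 := ℝ) (w (y i)) (h i) + b (y i) - 1 := by
  have : Nontrivial (Fin C) := Fin.nontrivial_iff_two_le.2 hC
  set S := {z : ℝ | ∃ c : Fin C, c ≠ y i ∧ z = inner (𝕜 := ℝ) (w c) (h i) + b c} with hS
  have hfin : S.Finite := by
    have : S ⊆ (fun c : Fin C => inner (𝕜 := ℝ) (w c) (h i) + b c) '' Set.univ := by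
      rintro z ⟨c, _, rfl⟩; exact ⟨c, trivial, rfl⟩
    exact Set.Finite.subset (Set.finite_univ.image _) this
  obtain ⟨c₀, hc₀⟩ := exists_ne (y i)
  have hne : S.Nonempty := ⟨_, c₀, hc₀, rfl⟩
  constructor
  · intro hm c hc
    have h1 : inner (𝕜 := ℝ) (w c) (h i) + b c ≤ sSup S :=
      le_csSup hfin.bddAbove ⟨c, hc, rfl⟩
    have : sSup S ≤ inner (𝕜 := ℝ) (w (y i)) (h i) + b (y i) - 1 := by
      unfold ncMargin at hm; linarith
    linarith
  · intro hm
    have : sSup S ≤ inner (𝕜 := ℝ) (w (y i)) (h i) + b (y i) - 1 := by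
      apply csSup_le hne
      rintro z ⟨c, hc, rfl⟩; exact hm c hc
    unfold ncMargin; linarith

lemma step1_inner {w : Fin C → EuclideanSpace ℝ (Fin d)} {b : Fin C → ℝ}
    {hi : EuclideanSpace ℝ (Fin d)} (hC : 2 ≤ C) (c : Fin C)
    (hm : ∀ c', c' ≠ c → inner (𝕜 := ℝ) (w c') hi + b c' ≤
        inner (𝕜 := ℝ) (w c) hi + b c - 1) :
    (C : ℝ) - 1 - C * b c + (∑ c', b c') ≤
      inner (𝕜 := ℝ) ((C : ℝ) • w c - ∑ c', w c') hi := by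
  have hsum : ∑ c' ∈ univ.erase c, (inner (𝕜 := ℝ) (w c') hi + b c') ≤
      ∑ _c' ∈ univ.erase c, (inner (𝕜 := ℝ) (w c) hi + b c - 1) := by
    apply Finset.sum_le_sum
    intro c' hc'
    exact hm c' (Finset.mem_erase.1 hc').1
  have hcard : (univ.erase c).card = C - 1 := by simp [Finset.card_erase_of_mem]
  have hCr : ((C : ℝ) - 1) = ((C - 1 : ℕ) : ℝ) := by
    have : 1 ≤ C := by omega
    push_cast [this]; ring
  have hL : ∑ c' ∈ univ.erase c, (inner (𝕜 := ℝ) (w c') hi + b c')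
      = (inner (𝕜 := ℝ) (∑ c', w c') hi - inner (𝕜 := ℝ) (w c) hi) + ((∑ c', b c') - b c) := by
    rw [Finset.sum_add_distrib]
    rw [Finset.sum_erase_eq_sub (Finset.mem_univ c), Finset.sum_erase_eq_sub (Finset.mem_univ c)]
    rw [sum_inner]
  have hR : ∑ _c' ∈ univ.erase c, (inner (𝕜 := ℝ) (w c) hi + b c - 1)
      = ((C : ℝ) - 1) * (inner (𝕜 := ℝ) (w c) hi + b c - 1) := by
    rw [Finset.sum_const, hcard, hCr]; ring
  rw [hL, hR] at hsum
  have hexp : inner (𝕜 := ℝ) ((C : ℝ) • w c - ∑ c', w c') hi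
      = (C : ℝ) * inner (𝕜 := ℝ) (w c) hi - inner (𝕜 := ℝ) (∑ c', w c') hi := by
    rw [inner_sub_left, real_inner_smul_left]
  nlinarith [hsum, hexp]

lemma step1 {w : Fin C → EuclideanSpace ℝ (Fin d)} {b : Fin C → ℝ}
    {hi : EuclideanSpace ℝ (Fin d)} (hC : 2 ≤ C) (hnorm : ‖hi‖ = 1) (c : Fin C)
    (hm : ∀ c', c' ≠ c → inner (𝕜 := ℝ) (w c') hi + b c' ≤
        inner (𝕜 := ℝ) (w c) hi + b c - 1) :
    (C : ℝ) - 1 - C * b c + (∑ c', b c') ≤ ‖(C : ℝ) • w c - ∑ c', w c'‖ := by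
  refine le_trans (step1_inner hC c hm) ?_
  calc inner (𝕜 := ℝ) ((C : ℝ) • w c - ∑ c', w c') hi
      ≤ ‖(C : ℝ) • w c - ∑ c', w c'‖ * ‖hi‖ := real_inner_le_norm _ _
    _ = ‖(C : ℝ) • w c - ∑ c', w c'‖ := by rw [hnorm, mul_one]

lemma step4 (w : Fin C → EuclideanSpace ℝ (Fin d)) :
    ∑ c, ‖(C : ℝ) • w c - ∑ c', w c'‖ ^ 2
      = (C : ℝ) ^ 2 * ∑ c, ‖w c‖ ^ 2 - C * ‖∑ c', w c'‖ ^ 2 := by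
  have hexp : ∀ c, ‖(C : ℝ) • w c - ∑ c', w c'‖ ^ 2
      = (C : ℝ) ^ 2 * ‖w c‖ ^ 2 - 2 * C * inner (𝕜 := ℝ) (w c) (∑ c', w c') + ‖∑ c', w c'‖ ^ 2 := by
    intro c
    rw [norm_sub_sq_real, real_inner_smul_left, norm_smul]
    simp [abs_of_nonneg (show (0:ℝ) ≤ C by positivity)]
    ring
  rw [Finset.sum_congr rfl (fun c _ => hexp c)]
  rw [Finset.sum_add_distrib, Finset.sum_sub_distrib, ← Finset.mul_sum, ← Finset.mul_sum,
    ← sum_inner, real_inner_self_eq_norm_sq, Finset.sum_const, Finset.card_univ, Fintype.card_fin,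
    nsmul_eq_mul]
  ring

lemma key {w : Fin C → EuclideanSpace ℝ (Fin d)} {b : Fin C → ℝ} (hC : 2 ≤ C)
    (hstep1 : ∀ c : Fin C, (C : ℝ) - 1 - C * b c + (∑ c', b c') ≤ ‖(C : ℝ) • w c - ∑ c', w c'‖) :
    ((C : ℝ) - 1) ^ 2 + ‖∑ c, w c‖ ^ 2 ≤ C * ∑ c, ‖w c‖ ^ 2 := by
  have hCpos : (0 : ℝ) < C := by positivity
  have hstep2 : (C : ℝ) * ((C : ℝ) - 1) ≤ ∑ c, ‖(C : ℝ) • w c - ∑ c', w c'‖ := by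
    calc (C : ℝ) * ((C : ℝ) - 1)
        = ∑ c : Fin C, ((C : ℝ) - 1 - C * b c + (∑ c', b c')) := by
          rw [Finset.sum_add_distrib, Finset.sum_sub_distrib, ← Finset.mul_sum,
            Finset.sum_const, Finset.card_univ, Fintype.card_fin, Finset.sum_const,
            Finset.card_univ, Fintype.card_fin, nsmul_eq_mul, nsmul_eq_mul]
          ring
      _ ≤ _ := Finset.sum_le_sum fun c _ => hstep1 c
  have hstep3 : (∑ c, ‖(C : ℝ) • w c - ∑ c', w c'‖) ^ 2
      ≤ (C : ℝ) * ∑ c, ‖(C : ℝ) • w c - ∑ c', w c'‖ ^ 2 := by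
    have := sq_sum_le_card_mul_sum_sq (s := (univ : Finset (Fin C)))
      (f := fun c => ‖(C : ℝ) • w c - ∑ c', w c'‖)
    simpa using this
  have hsqmono : ((C : ℝ) * ((C : ℝ) - 1)) ^ 2 ≤ (∑ c, ‖(C : ℝ) • w c - ∑ c', w c'‖) ^ 2 := by
    have hC2 : (2 : ℝ) ≤ C := by exact_mod_cast hC
    apply pow_le_pow_left₀ (by nlinarith) hstep2
  have h4 := step4 w
  have H : (C : ℝ) ^ 2 * (((C : ℝ) - 1) ^ 2 + ‖∑ c, w c‖ ^ 2)
      ≤ (C : ℝ) ^ 2 * ((C : ℝ) * ∑ c, ‖w c‖ ^ 2) := by nlinarith [hsqmono, hstep3, h4]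
  exact le_of_mul_le_mul_left H (by positivity)

lemma key' (hC : 2 ≤ C) {y : Fin n → Fin C} (hy : Function.Surjective y)
    (w : Fin C → EuclideanSpace ℝ (Fin d)) (b : Fin C → ℝ)
    (h : Fin n → EuclideanSpace ℝ (Fin d))
    (hmar : ∀ i, 1 ≤ ncMargin w b y h i) (hnorm : ∀ i, ‖h i‖ = 1) :
    ((C : ℝ) - 1) ^ 2 + ‖∑ c, w c‖ ^ 2 ≤ C * ∑ c, ‖w c‖ ^ 2 := by
  apply key hC
  intro c
  obtain ⟨i, rfl⟩ := hy c
  exact step1 hC (hnorm i) (y i) (fun c' hc' => (margin_iff hC w b y h i).1 (hmar i) c' hc')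

lemma struct_feasible (hC : 2 ≤ C) {w : Fin C → EuclideanSpace ℝ (Fin d)} {b : Fin C → ℝ}
    {y : Fin n → Fin C} {h : Fin n → EuclideanSpace ℝ (Fin d)}
    (hw_norm : ∀ c, ‖w c‖ = ((C : ℝ) - 1) / C)
    (hinner : ∀ c c', c ≠ c' → inner (𝕜 := ℝ) (w c) (w c') = -(((C : ℝ) - 1) / C ^ 2))
    (hb : b = 0)
    (hh : ∀ i, h i = ((C : ℝ) / ((C : ℝ) - 1)) • w (y i)) :
    (∀ i, 1 ≤ ncMargin w b y h i) ∧ (∀ i, ‖h i‖ = 1) := by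
  have hC2 : (2 : ℝ) ≤ C := by exact_mod_cast hC
  have hC1 : (0 : ℝ) < (C : ℝ) - 1 := by linarith
  have hCpos : (0 : ℝ) < C := by linarith
  constructor
  · intro i
    rw [margin_iff hC]
    intro c hc
    rw [hb, hh i]
    have h1 : inner (𝕜 := ℝ) (w c) (((C : ℝ) / ((C : ℝ) - 1)) • w (y i))
        = ((C : ℝ) / ((C : ℝ) - 1)) * inner (𝕜 := ℝ) (w c) (w (y i)) := real_inner_smul_right _ _ _
    have h2 : inner (𝕜 := ℝ) (w (y i)) (((C : ℝ) / ((C : ℝ) - 1)) • w (y i))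
        = ((C : ℝ) / ((C : ℝ) - 1)) * inner (𝕜 := ℝ) (w (y i)) (w (y i)) :=
      real_inner_smul_right _ _ _
    rw [h1, h2, hinner c (y i) hc, real_inner_self_eq_norm_sq, hw_norm]
    simp only [Pi.zero_apply]
    have e1 : (C : ℝ) / ((C : ℝ) - 1) * -(((C : ℝ) - 1) / (C : ℝ) ^ 2) = -(1 / (C : ℝ)) := by
      field_simp
    have e2 : (C : ℝ) / ((C : ℝ) - 1) * ((((C : ℝ) - 1) / (C : ℝ)) ^ 2) = ((C : ℝ) - 1) / C := by
      field_simp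
    have e3 : ((C : ℝ) - 1) / C - 1 = -(1 / (C : ℝ)) := by field_simp; ring
    rw [e1, e2]
    linarith [e3]
  · intro i
    rw [hh i, norm_smul, hw_norm, Real.norm_eq_abs, abs_of_pos (by positivity)]
    field_simp

lemma sum_ind (hdC : C ≤ d) (c : Fin C) (f : Fin d → ℝ) :
    ∑ j : Fin d, (if (j : ℕ) = (c : ℕ) then f j else 0) = f ⟨c, lt_of_lt_of_le c.isLt hdC⟩ := by
  set j₀ : Fin d := ⟨c, lt_of_lt_of_le c.isLt hdC⟩ with hj₀
  rw [Finset.sum_congr rfl (fun j _ => ?_), Finset.sum_ite_eq' univ j₀ f]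
  · simp
  · congr 1
    have : ((j : ℕ) = (c : ℕ)) = (j = j₀) := by
      simp [hj₀, Fin.ext_iff]
    rw [this]

lemma sum_lt (hdC : C ≤ d) (x : ℝ) :
    ∑ j : Fin d, (if (j : ℕ) < C then x else 0) = C * x := by
  rw [Fin.sum_univ_eq_sum_range (fun m => if m < C then x else 0) d]
  rw [Finset.sum_ite, Finset.sum_const, Finset.sum_const]
  have : (Finset.range d).filter (· < C) = Finset.range C := by
    ext m; simp; omega
  rw [this]
  simp [mul_comm]

noncomputable def etfU (d C : ℕ) (c : Fin C) : EuclideanSpace ℝ (Fin d) :=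
  (WithLp.equiv 2 (Fin d → ℝ)).symm
    (fun j => (if (j : ℕ) = (c : ℕ) then (1 : ℝ) else 0) -
      (if (j : ℕ) < C then 1 / (C : ℝ) else 0))

lemma etf_inner (hdC : C ≤ d) (c c' : Fin C) :
    inner (𝕜 := ℝ) (etfU d C c) (etfU d C c')
      = (if c = c' then (1 : ℝ) else 0) - 1 / C := by
  have hC0 : ((C : ℝ)) ≠ 0 := by
    have : 0 < C := c.pos
    positivity
  rw [PiLp.inner_apply]
  simp only [etfU, WithLp.equiv_symm_apply, WithLp.ofLp_toLp, RCLike.inner_apply, conj_trivial]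
  have hexp : ∀ j : Fin d,
      ((if (j : ℕ) = (c : ℕ) then (1 : ℝ) else 0) - (if (j : ℕ) < C then 1 / (C:ℝ) else 0)) *
      ((if (j : ℕ) = (c' : ℕ) then (1 : ℝ) else 0) - (if (j : ℕ) < C then 1 / (C:ℝ) else 0))
      = (if (j : ℕ) = (c : ℕ) then (if (j : ℕ) = (c' : ℕ) then (1:ℝ) else 0) else 0)
        - (if (j : ℕ) = (c : ℕ) then 1 / (C:ℝ) else 0)
        - (if (j : ℕ) = (c' : ℕ) then 1 / (C:ℝ) else 0)
        + (if (j : ℕ) < C then 1 / (C:ℝ)^2 else 0) := by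
    intro j
    have hjc : (j : ℕ) = (c : ℕ) → (j : ℕ) < C := fun h => h ▸ c.isLt
    have hcC : (c : ℕ) < C := c.isLt
    have hc'C : (c' : ℕ) < C := c'.isLt
    have hjc' : (j : ℕ) = (c' : ℕ) → (j : ℕ) < C := fun h => h ▸ c'.isLt
    by_cases h1 : (j : ℕ) = (c : ℕ) <;> by_cases h2 : (j : ℕ) = (c' : ℕ) <;>
      by_cases h3 : (j : ℕ) < C <;>
      first
        | exact absurd (hjc h1) h3
        | exact absurd (hjc' h2) h3
        | (simp only [h1, h2, h3, hcC, hc'C, if_true, if_false, if_pos, if_neg, not_false_iff]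
           first
             | (split_ifs <;> first | ring | omega)
             | ring)
  rw [Finset.sum_congr rfl (fun j _ => (mul_comm _ _).trans (hexp j))]
  rw [Finset.sum_add_distrib, Finset.sum_sub_distrib, Finset.sum_sub_distrib]
  rw [sum_ind hdC c, sum_ind hdC c', sum_ind hdC c (fun _ => 1 / (C:ℝ)), sum_lt hdC]
  have : (if ((⟨(c:ℕ), lt_of_lt_of_le c.isLt hdC⟩ : Fin d) : ℕ) = (c' : ℕ) then (1:ℝ) else 0)
      = (if c = c' then (1:ℝ) else 0) := by
    simp [Fin.ext_iff]
  rw [this]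
  field_simp
  ring

lemma etf_exists (hC : 2 ≤ C) (hdC : C ≤ d) :
    ∃ w₀ : Fin C → EuclideanSpace ℝ (Fin d),
      (∀ c, ‖w₀ c‖ = ((C : ℝ) - 1) / C) ∧
      (∀ c c', c ≠ c' → inner (𝕜 := ℝ) (w₀ c) (w₀ c') = -(((C : ℝ) - 1) / C ^ 2)) ∧
      (∑ c, w₀ c) = 0 := by
  have hC2 : (2 : ℝ) ≤ C := by exact_mod_cast hC
  have hCpos : (0 : ℝ) < C := by linarith
  have hC1 : (0 : ℝ) < (C : ℝ) - 1 := by linarith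
  set α : ℝ := Real.sqrt (((C : ℝ) - 1) / C) with hα
  have hα2 : α ^ 2 = ((C : ℝ) - 1) / C := Real.sq_sqrt (by positivity)
  refine ⟨fun c => α • etfU d C c, ?_, ?_, ?_⟩
  · intro c
    have h1 : ‖α • etfU d C c‖ ^ 2 = (((C : ℝ) - 1) / C) ^ 2 := by
      rw [← real_inner_self_eq_norm_sq, real_inner_smul_left, real_inner_smul_right,
        etf_inner hdC c c]
      simp only [if_pos rfl, ↓reduceIte]
      rw [← mul_assoc, ← pow_two, hα2]
      field_simp
    have h2 : (0 : ℝ) ≤ ‖α • etfU d C c‖ := norm_nonneg _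
    nlinarith [h1, h2, hC1, hCpos, div_pos hC1 hCpos]
  · intro c c' hne
    rw [real_inner_smul_left, real_inner_smul_right, etf_inner hdC c c', if_neg hne,
      ← mul_assoc, ← pow_two, hα2]
    rw [zero_sub, mul_neg, div_mul_div_comm, mul_one, ← pow_two, neg_inj]
  · have hz : ‖∑ c, α • etfU d C c‖ ^ 2 = 0 := by
      rw [← real_inner_self_eq_norm_sq, sum_inner]
      rw [Finset.sum_congr rfl
        (fun c _ => inner_sum (𝕜 := ℝ) univ (fun c' => α • etfU d C c') (α • etfU d C c))]
      have hterm : ∀ c : Fin C, ∑ c', inner (𝕜 := ℝ) (α • etfU d C c) (α • etfU d C c')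
          = (((C : ℝ) - 1) / C) * ∑ c', ((if c = c' then (1:ℝ) else 0) - 1 / C) := by
        intro c
        rw [Finset.mul_sum]
        apply Finset.sum_congr rfl
        intro c' _
        rw [real_inner_smul_left, real_inner_smul_right, etf_inner hdC c c', ← mul_assoc,
          ← pow_two, hα2]
      rw [Finset.sum_congr rfl (fun c _ => hterm c)]
      have : ∀ c : Fin C, ∑ c', ((if c = c' then (1:ℝ) else 0) - 1 / C) = 0 := by
        intro c
        rw [Finset.sum_sub_distrib, Finset.sum_ite_eq univ c (fun _ => (1:ℝ))]
        simp only [Finset.sum_const, Finset.card_univ, Fintype.card_fin, nsmul_eq_mul,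
          if_pos (Finset.mem_univ c)]
        field_simp
        ring
      rw [Finset.sum_congr rfl (fun c _ => by rw [this c, mul_zero])]
      exact Finset.sum_const_zero
    have := pow_eq_zero_iff (n := 2) (by norm_num) |>.1 hz
    exact norm_eq_zero.1 this

end NCAux

set_option maxHeartbeats 2000000 in
open NCAux in
/-- Lemma H.4: `(w,b,h)` minimizes `Σ_c ‖w_c‖² + ‖b‖²` subject to
`min_i q_i ≥ 1` and `‖h_i‖ = 1` iff the `w_c` form a regular `(C−1)`-simplex
with `‖w_c‖ = (C−1)/C`, `Σ_c w_c = 0`, `b = 0`, and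
`h_i = (C/(C−1)) w_{y_i}`. -/
theorem stmt_15 {d C n : ℕ} (hC : 2 ≤ C) (hdC : C ≤ d)
    (y : Fin n → Fin C) (hy : Function.Surjective y)
    (w : Fin C → EuclideanSpace ℝ (Fin d)) (b : Fin C → ℝ)
    (h : Fin n → EuclideanSpace ℝ (Fin d)) :
    (((∀ i, 1 ≤ ncMargin w b y h i) ∧ (∀ i, ‖h i‖ = 1)) ∧
      ∀ (w' : Fin C → EuclideanSpace ℝ (Fin d)) (b' : Fin C → ℝ)
        (h' : Fin n → EuclideanSpace ℝ (Fin d)),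
        ((∀ i, 1 ≤ ncMargin w' b' y h' i) ∧ (∀ i, ‖h' i‖ = 1)) →
        (∑ c, ‖w c‖ ^ 2) + ∑ c, b c ^ 2 ≤ (∑ c, ‖w' c‖ ^ 2) + ∑ c, b' c ^ 2) ↔
    ((∀ c₁ c₂ : Fin C, c₁ ≠ c₂ →
        ‖w c₁ - w c₂‖ ^ 2 = 2 * ((C : ℝ) - 1) / C) ∧
      (∀ c, ‖w c‖ = ((C : ℝ) - 1) / C) ∧ (∑ c, w c) = 0 ∧ b = 0 ∧
      (∀ i, h i = ((C : ℝ) / ((C : ℝ) - 1)) • w (y i))) := by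
  have hC2 : (2 : ℝ) ≤ C := by exact_mod_cast hC
  have hCpos : (0 : ℝ) < C := by linarith
  have hC1 : (0 : ℝ) < (C : ℝ) - 1 := by linarith
  constructor
  · rintro ⟨⟨hmar, hnorm⟩, hopt⟩
    -- construct competitor
    obtain ⟨w₀, hw₀n, hw₀i, hw₀s⟩ := etf_exists hC hdC
    have hfeas₀ := struct_feasible (b := (0 : Fin C → ℝ)) (y := y)
      (h := fun i => ((C : ℝ) / ((C : ℝ) - 1)) • w₀ (y i)) hC hw₀n hw₀i rfl (fun _ => rfl)
    have hobj₀ : (∑ c, ‖w₀ c‖ ^ 2) + ∑ c, (0 : Fin C → ℝ) c ^ 2 = ((C : ℝ) - 1) ^ 2 / C := by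
      rw [Finset.sum_congr rfl (fun c _ => by rw [hw₀n c])]
      simp only [Pi.zero_apply, ne_eq, OfNat.ofNat_ne_zero, not_false_eq_true, zero_pow,
        Finset.sum_const, Finset.card_univ, Fintype.card_fin, nsmul_eq_mul, smul_eq_mul]
      rw [div_pow]
      field_simp
      ring
    have hS : (∑ c, ‖w c‖ ^ 2) + ∑ c, b c ^ 2 ≤ ((C : ℝ) - 1) ^ 2 / C := by
      calc (∑ c, ‖w c‖ ^ 2) + ∑ c, b c ^ 2
          ≤ (∑ c, ‖w₀ c‖ ^ 2) + ∑ c, (0 : Fin C → ℝ) c ^ 2 := hopt w₀ 0 _ hfeas₀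
        _ = _ := hobj₀
    have hkey := key' hC hy w b h hmar hnorm
    have hbW : ‖∑ c, w c‖ ^ 2 + C * ∑ c, b c ^ 2 ≤ 0 := by
      have h1 : (C : ℝ) * ((∑ c, ‖w c‖ ^ 2) + ∑ c, b c ^ 2) ≤ (C : ℝ) * (((C : ℝ) - 1) ^ 2 / C) :=
        mul_le_mul_of_nonneg_left hS (le_of_lt hCpos)
      have h2 : (C : ℝ) * (((C : ℝ) - 1) ^ 2 / C) = ((C : ℝ) - 1) ^ 2 := by field_simp
      nlinarith [hkey]
    have hbnn : (0 : ℝ) ≤ ∑ c, b c ^ 2 := Finset.sum_nonneg fun c _ => sq_nonneg _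
    have hWnn : (0 : ℝ) ≤ ‖∑ c, w c‖ ^ 2 := sq_nonneg _
    have hb2 : ∑ c, b c ^ 2 = 0 := by nlinarith
    have hW : (∑ c, w c) = 0 := by
      have hz : ‖∑ c, w c‖ ^ 2 = 0 := by nlinarith
      exact norm_eq_zero.1 (pow_eq_zero_iff (two_ne_zero) |>.1 hz)
    have hb0 : b = 0 := by
      funext c
      have := (Finset.sum_eq_zero_iff_of_nonneg (fun c _ => sq_nonneg (b c))).1 hb2 c
        (Finset.mem_univ c)
      exact pow_eq_zero_iff two_ne_zero |>.1 this
    have hsum_w : ∑ c, ‖w c‖ ^ 2 = ((C : ℝ) - 1) ^ 2 / C := by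
      have hup : ∑ c, ‖w c‖ ^ 2 ≤ ((C : ℝ) - 1) ^ 2 / C := by linarith [hS, hb2]
      have hlow : ((C : ℝ) - 1) ^ 2 / C ≤ ∑ c, ‖w c‖ ^ 2 := by
        rw [div_le_iff₀ hCpos]
        rw [hW] at hkey
        simp only [norm_zero] at hkey
        nlinarith [hkey]
      linarith
    -- margins with b = 0
    have hmar' : ∀ i, ∀ c', c' ≠ y i → inner (𝕜 := ℝ) (w c') (h i) ≤
        inner (𝕜 := ℝ) (w (y i)) (h i) - 1 := by
      intro i c' hc'
      have := (margin_iff hC w b y h i).1 (hmar i) c' hc'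
      rw [hb0] at this
      simpa using this
    -- per-class norms
    have hnormc : ∀ c, ‖w c‖ = ((C : ℝ) - 1) / C := by
      have hlow : ∀ c, ((C : ℝ) - 1) / C ≤ ‖w c‖ := by
        intro c
        obtain ⟨i, rfl⟩ := hy c
        have hst := step1 (b := b) hC (hnorm i) (y i) (fun c' hc' => by
          have := (margin_iff hC w b y h i).1 (hmar i) c' hc'
          exact this)
        rw [hb0, hW] at hst
        simp only [Pi.zero_apply, mul_zero, Finset.sum_const, Finset.card_univ,
          Fintype.card_fin, smul_zero, sub_zero] at hst
        rw [norm_smul, Real.norm_eq_abs, abs_of_pos hCpos] at hst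
        rw [div_le_iff₀ hCpos]
        simp only [add_zero, sub_zero] at hst
        nlinarith [hst]
      have hzero : ∀ c ∈ (univ : Finset (Fin C)), ‖w c‖ ^ 2 - (((C : ℝ) - 1) / C) ^ 2 = 0 := by
        apply (Finset.sum_eq_zero_iff_of_nonneg ?_).1
        · rw [Finset.sum_sub_distrib, hsum_w, Finset.sum_const, Finset.card_univ,
            Fintype.card_fin, nsmul_eq_mul, div_pow]
          field_simp
          ring
        · intro c _
          have := hlow c
          have h0 : (0 : ℝ) ≤ ((C : ℝ) - 1) / C := by positivity
          nlinarith
      intro c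
      have h1 : ‖w c‖ ^ 2 = (((C : ℝ) - 1) / C) ^ 2 := by linarith [hzero c (Finset.mem_univ c)]
      have h0 : (0 : ℝ) ≤ ((C : ℝ) - 1) / C := by positivity
      nlinarith [norm_nonneg (w c), h0, h1]
    -- features
    have hh : ∀ i, h i = ((C : ℝ) / ((C : ℝ) - 1)) • w (y i) := by
      intro i
      have hin := step1_inner (b := b) hC (y i) (fun c' hc' => by
        exact (margin_iff hC w b y h i).1 (hmar i) c' hc')
      rw [hb0, hW] at hin
      simp only [Pi.zero_apply, mul_zero, Finset.sum_const, Finset.card_univ,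
        Fintype.card_fin, smul_zero, sub_zero, add_zero] at hin
      rw [real_inner_smul_left] at hin
      have hub : inner (𝕜 := ℝ) (w (y i)) (h i) ≤ ‖w (y i)‖ * ‖h i‖ := real_inner_le_norm _ _
      have heq : inner (𝕜 := ℝ) (w (y i)) (h i) = ‖w (y i)‖ * ‖h i‖ := by
        rw [hnormc, hnorm, mul_one] at hub ⊢
        have hlb : ((C : ℝ) - 1) / C ≤ inner (𝕜 := ℝ) (w (y i)) (h i) := by
          rw [div_le_iff₀ hCpos]
          nlinarith [hin]
        linarith
      have hkey2 := inner_eq_norm_mul_iff_real.1 heq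
      rw [hnorm i, hnormc (y i), one_smul] at hkey2
      -- hkey2 : w (y i) = ((C-1)/C) • h i
      rw [hkey2, smul_smul]
      rw [show (C : ℝ) / ((C : ℝ) - 1) * (((C : ℝ) - 1) / C) = 1 by field_simp]
      rw [one_smul]
    -- pairwise inner products
    have hip : ∀ c : Fin C, ∀ c' ∈ univ.erase c,
        inner (𝕜 := ℝ) (w c') (w c) = -(((C : ℝ) - 1) / C ^ 2) := by
      intro c
      obtain ⟨i, rfl⟩ := hy c
      have hub : ∀ c' ∈ univ.erase (y i),
          inner (𝕜 := ℝ) (w c') (w (y i)) ≤ -(((C : ℝ) - 1) / C ^ 2) := by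
        intro c' hc'
        have hm := hmar' i c' (Finset.mem_erase.1 hc').1
        rw [hh i, real_inner_smul_right, real_inner_smul_right,
          real_inner_self_eq_norm_sq, hnormc] at hm
        set x := inner (𝕜 := ℝ) (w c') (w (y i)) with hx
        have hcalc : x = (((C : ℝ) - 1) / C) * (((C : ℝ) / ((C : ℝ) - 1)) * x) := by
          field_simp
        have hle : (((C : ℝ) - 1) / C) * (((C : ℝ) / ((C : ℝ) - 1)) * x)
            ≤ (((C : ℝ) - 1) / C) * (((C : ℝ) / ((C : ℝ) - 1)) * (((C : ℝ) - 1) / C) ^ 2 - 1) :=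
          mul_le_mul_of_nonneg_left hm (by positivity)
        have hrhs : (((C : ℝ) - 1) / C) * (((C : ℝ) / ((C : ℝ) - 1)) * (((C : ℝ) - 1) / C) ^ 2 - 1)
            = -(((C : ℝ) - 1) / C ^ 2) := by
          field_simp
          ring
        rw [hrhs] at hle
        linarith [hcalc, hle]
      have hsumeq : ∑ c' ∈ univ.erase (y i), inner (𝕜 := ℝ) (w c') (w (y i))
          = ∑ _c' ∈ univ.erase (y i), -(((C : ℝ) - 1) / C ^ 2) := by
        rw [Finset.sum_erase_eq_sub (Finset.mem_univ (y i)), ← sum_inner, hW]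
        rw [real_inner_self_eq_norm_sq, hnormc]
        rw [Finset.sum_const, Finset.card_erase_of_mem (Finset.mem_univ (y i)),
          Finset.card_univ, Fintype.card_fin, nsmul_eq_mul]
        have hCr : ((C - 1 : ℕ) : ℝ) = (C : ℝ) - 1 := by
          have : 1 ≤ C := by omega
          push_cast [this]; ring
        rw [hCr]
        simp only [inner_zero_left, zero_sub, div_pow]
        field_simp
      exact fun c' hc' => (Finset.sum_eq_sum_iff_of_le hub).1 hsumeq c' hc'
    refine ⟨?_, hnormc, hW, hb0, hh⟩
    intro c₁ c₂ hne
    have hi12 : inner (𝕜 := ℝ) (w c₁) (w c₂) = -(((C : ℝ) - 1) / C ^ 2) :=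
      hip c₂ c₁ (Finset.mem_erase.2 ⟨hne, Finset.mem_univ _⟩)
    rw [norm_sub_sq_real, hi12, hnormc, hnormc, div_pow]
    field_simp
    ring
  · rintro ⟨hdist, hnormc, hW, hb0, hh⟩
    have hinner : ∀ c c', c ≠ c' →
        inner (𝕜 := ℝ) (w c) (w c') = -(((C : ℝ) - 1) / C ^ 2) := by
      intro c c' hne
      have hns := norm_sub_sq_real (w c) (w c')
      rw [hdist c c' hne, hnormc, hnormc] at hns
      have hfd : (((C : ℝ) - 1) / C) ^ 2 + (((C : ℝ) - 1) / C) ^ 2 - 2 * ((C : ℝ) - 1) / C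
          = 2 * -(((C : ℝ) - 1) / C ^ 2) := by
        field_simp
        ring
      linarith [hns, hfd]
    have hfeas := struct_feasible hC hnormc hinner hb0 hh
    refine ⟨hfeas, ?_⟩
    rintro w' b' h' ⟨hm', hn'⟩
    have hkey := key' hC hy w' b' h' hm' hn'
    have hobj : (∑ c, ‖w c‖ ^ 2) + ∑ c, b c ^ 2 = ((C : ℝ) - 1) ^ 2 / C := by
      rw [hb0, Finset.sum_congr rfl (fun c _ => by rw [hnormc c])]
      simp only [Pi.zero_apply, ne_eq, OfNat.ofNat_ne_zero, not_false_eq_true, zero_pow,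
        Finset.sum_const, Finset.card_univ, Fintype.card_fin, nsmul_eq_mul, smul_eq_mul]
      rw [div_pow]
      field_simp
      ring
    rw [hobj]
    have hb'nn : (0 : ℝ) ≤ ∑ c, b' c ^ 2 := Finset.sum_nonneg fun c _ => sq_nonneg _
    have hlow : ((C : ℝ) - 1) ^ 2 / C ≤ ∑ c, ‖w' c‖ ^ 2 := by
      rw [div_le_iff₀ hCpos]
      nlinarith [hkey, sq_nonneg ‖∑ c, w' c‖]
    linarith
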